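/- Let S' = (Z'_1,…,Z'_n) be i.i.d. from μ on a finite set, let ℓ(w,Z) be σ²-subgaussian under Z ∼ μ for all w ∈ W, and let W' = A(S') be the output of any Markov kernel. Then E[L_μ(W') − (1/n)Σ_i ℓ(W',Z'_i)] ≤ √( (2σ²/n) I(S'; W') ). -/

import Mathlib

/-!
Donsker–Varadhan: for the joint law `q` of `(W', S')`, the product `p` of its marginals and any
`g`, `E_q[g] ≤ KL(q ‖ p) + log E_p[e^g]`, and `KL(q ‖ p) = I(S'; W')`. Since the `S'`-marginal
of `q` is `μ^⊗n`, taking `g = t · n · gen(w, s)` with `gen(w, s) = L_μ(w) - (1/n) Σᵢ ℓ(w, sᵢ)`,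
the inner expectation over `s` factorises and σ²-subgaussianity of each factor gives
`log E_p[e^g] ≤ n σ² t² / 2`, so `n t · gen ≤ I(S'; W') + n σ² t² / 2` for every `t`.
The choice `t = gen / σ²` yields `gen² ≤ (2σ²/n) I(S'; W')`.
-/

open scoped BigOperators

noncomputable def mutInfo {A B : Type*} [Fintype A] [Fintype B]
    (p : A × B → ℝ) : ℝ :=
  ∑ x : A × B,
    p x * Real.log (p x / ((∑ b, p (x.1, b)) * ∑ a, p (a, x.2)))

open Real

noncomputable def discreteKLDiv {X : Type*} [Fintype X] (q p : X → ℝ) : ℝ :=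
  ∑ x, q x * log (q x / p x)

theorem mul_sub_mul_log_div_le {q p : ℝ} (hq : 0 ≤ q) (hp : 0 ≤ p) (hqp : 0 < q → 0 < p)
    (y : ℝ) : q * y - q * log (q / p) ≤ p * exp y - q := by
  rcases hq.eq_or_lt with rfl | hq
  · simpa using mul_nonneg hp (exp_pos y).le
  have hp := hqp hq
  have hexp : q * exp (y - log (q / p)) = p * exp y := by
    rw [exp_sub, exp_log (by positivity)]
    field_simp
  nlinarith [add_one_le_exp (y - log (q / p))]

section DonskerVaradhan

variable {X : Type*} [Fintype X] {q p : X → ℝ}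

theorem sum_mul_exp_pos (hq1 : ∑ x, q x = 1) (hp0 : ∀ x, 0 ≤ p x)
    (hqp : ∀ x, 0 < q x → 0 < p x) (g : X → ℝ) : 0 < ∑ x, p x * exp (g x) := by
  obtain ⟨x, -, hx⟩ : ∃ x ∈ Finset.univ, 0 < q x :=
    Finset.exists_lt_of_sum_lt (f := fun _ => 0) (by simp [hq1])
  refine Finset.sum_pos' (fun x _ => mul_nonneg (hp0 x) (exp_pos _).le) ⟨x, by simp, ?_⟩
  exact mul_pos (hqp x hx) (exp_pos _)

theorem sum_mul_le_discreteKLDiv_add_log (hq0 : ∀ x, 0 ≤ q x) (hq1 : ∑ x, q x = 1)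
    (hp0 : ∀ x, 0 ≤ p x) (hqp : ∀ x, 0 < q x → 0 < p x) (g : X → ℝ) :
    ∑ x, q x * g x ≤ discreteKLDiv q p + log (∑ x, p x * exp (g x)) := by
  set M := ∑ x, p x * exp (g x)
  have hM : 0 < M := sum_mul_exp_pos hq1 hp0 hqp g
  have hpt x := mul_sub_mul_log_div_le (hq0 x) (hp0 x) (hqp x) (g x - log M)
  have hsum : ∑ x, p x * exp (g x - log M) - ∑ x, q x = 0 := by
    simp only [exp_sub, exp_log hM, mul_div_assoc', ← Finset.sum_div, hq1]
    exact sub_eq_zero.2 (div_self hM.ne')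
  have := Finset.sum_le_sum fun x (_ : x ∈ Finset.univ) => hpt x
  simp only [Finset.sum_sub_distrib, mul_sub, ← Finset.sum_mul, hq1] at this
  unfold discreteKLDiv
  linarith

end DonskerVaradhan

section ProductMeasure

variable {Z : Type*} [Fintype Z]

theorem sum_pi_prod_mul_exp_sum (μ : Z → ℝ) (n : ℕ) (f : Z → ℝ) :
    ∑ s : Fin n → Z, (∏ i, μ (s i)) * exp (∑ i, f (s i)) = (∑ z, μ z * exp (f z)) ^ n := by
  rw [← Fin.prod_const, Finset.prod_univ_sum, Fintype.piFinset_univ]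
  simp only [exp_sum, ← Finset.prod_mul_distrib]

theorem sum_pi_prod_mul_exp_mul_sum_sub_le {μ : Z → ℝ} (hμ0 : ∀ z, 0 ≤ μ z) (f : Z → ℝ) (σ2 : ℝ)
    (hsub : ∀ s : ℝ, ∑ z, μ z * exp (s * (f z - ∑ z', μ z' * f z')) ≤ exp (σ2 * s ^ 2 / 2))
    (n : ℕ) (t : ℝ) :
    ∑ s : Fin n → Z, (∏ i, μ (s i)) * exp (t * ∑ i, (∑ z', μ z' * f z' - f (s i))) ≤
      exp (n * (σ2 * t ^ 2 / 2)) := by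
  have hneg := hsub (-t)
  simp only [neg_sq, neg_mul_comm, neg_sub] at hneg
  simp only [Finset.mul_sum]
  rw [sum_pi_prod_mul_exp_sum μ n fun z => t * (∑ z', μ z' * f z' - f z), exp_nat_mul]
  exact pow_le_pow_left₀ (Finset.sum_nonneg fun z _ => mul_nonneg (hμ0 z) (exp_pos _).le) hneg n

end ProductMeasure

section Marginals

variable {A B : Type*} [Fintype A] [Fintype B] {q : A × B → ℝ}

noncomputable def prodMarginals (q : A × B → ℝ) : A × B → ℝ :=
  fun x => (∑ b, q (x.1, b)) * ∑ a, q (a, x.2)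

theorem mutInfo_eq_discreteKLDiv_prodMarginals (q : A × B → ℝ) :
    mutInfo q = discreteKLDiv q (prodMarginals q) := rfl

theorem prodMarginals_nonneg (hq0 : ∀ x, 0 ≤ q x) (x : A × B) : 0 ≤ prodMarginals q x :=
  mul_nonneg (Finset.sum_nonneg fun _ _ => hq0 _) (Finset.sum_nonneg fun _ _ => hq0 _)

theorem prodMarginals_pos_of_pos (hq0 : ∀ x, 0 ≤ q x) {x : A × B} (hx : 0 < q x) :
    0 < prodMarginals q x :=
  mul_pos (hx.trans_le (Finset.single_le_sum (f := fun b => q (x.1, b))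
      (fun _ _ => hq0 _) (Finset.mem_univ x.2)))
    (hx.trans_le (Finset.single_le_sum (f := fun a => q (a, x.2))
      (fun _ _ => hq0 _) (Finset.mem_univ x.1)))

theorem sum_prodMarginals_mul_le (hq0 : ∀ x, 0 ≤ q x) (hq1 : ∑ x, q x = 1)
    {F : A × B → ℝ} {C : ℝ} (hF : ∀ a, ∑ b, (∑ a', q (a', b)) * F (a, b) ≤ C) :
    ∑ x, prodMarginals q x * F x ≤ C :=
  calc ∑ x, prodMarginals q x * F x
      = ∑ a, (∑ b, q (a, b)) * ∑ b, (∑ a', q (a', b)) * F (a, b) := by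
        rw [Fintype.sum_prod_type]
        refine Finset.sum_congr rfl fun a _ => ?_
        rw [Finset.mul_sum]
        simp only [prodMarginals, mul_assoc]
    _ ≤ ∑ a, (∑ b, q (a, b)) * C :=
        Finset.sum_le_sum fun a _ =>
          mul_le_mul_of_nonneg_left (hF a) (Finset.sum_nonneg fun _ _ => hq0 _)
    _ = C := by rw [← Finset.sum_mul, ← Fintype.sum_prod_type', hq1, one_mul]

end Marginals

theorem le_sqrt_of_forall_mul_le_add_sq {a b c m : ℝ} (hc : 0 < c) (hm : 0 < m)
    (h : ∀ t, m * t * a ≤ b + m * (c * t ^ 2 / 2)) : a ≤ √(2 * c / m * b) := by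
  have ht := h (a / c)
  apply le_sqrt_of_sq_le
  rw [div_mul_eq_mul_div, le_div_iff₀ hm]
  field_simp at ht
  nlinarith

theorem xu_raginsky_general {W Z : Type*} [Fintype W] [Fintype Z]
    (n : ℕ) (hn : 0 < n)
    (μ : Z → ℝ) (hμ0 : ∀ z, 0 ≤ μ z)
    (ℓ : W → Z → ℝ) (σ2 : ℝ) (hσ : 0 < σ2)
    (hsub : ∀ w, ∀ s : ℝ,
      (∑ z, μ z * Real.exp (s * (ℓ w z - ∑ z', μ z' * ℓ w z'))) ≤
        Real.exp (σ2 * s ^ 2 / 2))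
    (q : W × (Fin n → Z) → ℝ) (hq0 : ∀ x, 0 ≤ q x) (hq1 : ∑ x, q x = 1)
    (hmarg : ∀ s : Fin n → Z, (∑ w, q (w, s)) = ∏ i, μ (s i)) :
    (∑ x : W × (Fin n → Z), q x *
        ((∑ z, μ z * ℓ x.1 z) - (1 / (n : ℝ)) * ∑ i, ℓ x.1 (x.2 i))) ≤
      Real.sqrt ((2 * σ2 / (n : ℝ)) * mutInfo q) := by
  have hn' : (0 : ℝ) < n := by exact_mod_cast hn
  refine le_sqrt_of_forall_mul_le_add_sq hσ hn' fun t => ?_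
  set g : W × (Fin n → Z) → ℝ := fun x => t * ∑ i, (∑ z', μ z' * ℓ x.1 z' - ℓ x.1 (x.2 i))
  have hmgf : ∑ x, prodMarginals q x * exp (g x) ≤ exp (n * (σ2 * t ^ 2 / 2)) :=
    sum_prodMarginals_mul_le hq0 hq1 fun w => by
      simpa only [hmarg] using sum_pi_prod_mul_exp_mul_sum_sub_le hμ0 (ℓ w) σ2 (hsub w) n t
  have hqp x : 0 < q x → 0 < prodMarginals q x := prodMarginals_pos_of_pos hq0
  calc n * t * ∑ x, q x * ((∑ z, μ z * ℓ x.1 z) - 1 / (n : ℝ) * ∑ i, ℓ x.1 (x.2 i))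
      = ∑ x, q x * g x := by
        rw [Finset.mul_sum]
        refine Finset.sum_congr rfl fun x _ => ?_
        simp only [g, Finset.sum_sub_distrib, Finset.sum_const, Finset.card_univ,
          Fintype.card_fin, nsmul_eq_mul]
        field_simp
    _ ≤ mutInfo q + log (∑ x, prodMarginals q x * exp (g x)) := by
        rw [mutInfo_eq_discreteKLDiv_prodMarginals]
        exact sum_mul_le_discreteKLDiv_add_log hq0 hq1 (prodMarginals_nonneg hq0) hqp g
    _ ≤ mutInfo q + n * (σ2 * t ^ 2 / 2) := by
        gcongr
        exact (log_le_log (sum_mul_exp_pos hq1 (prodMarginals_nonneg hq0) hqp g) hmgf).trans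
          (log_exp _).le

/-- Xu–Raginsky bound (no mismatch): gen ≤ √((2σ²/n) I(S';W')). -/
theorem xu_raginsky {W Z : Type*} [Fintype W] [Fintype Z]
    (n : ℕ) (hn : 0 < n)
    (μ : Z → ℝ) (hμ0 : ∀ z, 0 ≤ μ z) (hμ1 : ∑ z, μ z = 1)
    (ℓ : W → Z → ℝ) (σ2 : ℝ) (hσ : 0 < σ2)
    (hsub : ∀ w, ∀ s : ℝ,
      (∑ z, μ z * Real.exp (s * (ℓ w z - ∑ z', μ z' * ℓ w z'))) ≤
        Real.exp (σ2 * s ^ 2 / 2))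
    (q : W × (Fin n → Z) → ℝ) (hq0 : ∀ x, 0 ≤ q x) (hq1 : ∑ x, q x = 1)
    (hmarg : ∀ s : Fin n → Z, (∑ w, q (w, s)) = ∏ i, μ (s i)) :
    (∑ x : W × (Fin n → Z), q x *
        ((∑ z, μ z * ℓ x.1 z) - (1 / (n : ℝ)) * ∑ i, ℓ x.1 (x.2 i))) ≤
      Real.sqrt ((2 * σ2 / (n : ℝ)) * mutInfo q) :=
  xu_raginsky_general n hn μ hμ0 ℓ σ2 hσ hsub q hq0 hq1 hmarg
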